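/- arXiv:1703.06565 — 2 statements merged into one kernel-verified Lean document; each statement's English description precedes it below -/
import Mathlib

section
/- The pignistic probability distribution BetP is compatible with the underlying BPA: for every B ⊆ Θ, Bl(B) ≤ Σ_{θ∈B} BetP(θ) ≤ Pl(B). -/
/-!
Exchanging the two sums gives `∑_{θ ∈ B} BetP θ = ∑_C (|B ∩ C| / |C|) m(C)`. The weight
`|B ∩ C| / |C|` is `1` for nonempty `C ⊆ B` and nonnegative otherwise, which yields the lower bound
`Bl(B)`. Taking `B = Θ` shows that BetP is a probability distribution, so the upper bound is the
lower bound for `Θ \ B` read through `Pl(B) = 1 - Bl(Θ \ B)`.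
-/

open Finset

section

variable {Θ 𝕜 : Type*} [DecidableEq Θ]

theorem card_inter_div_card_mul_of_subset [Field 𝕜] [CharZero 𝕜] {m : Finset Θ → 𝕜}
    (hempty : m ∅ = 0) {B C : Finset Θ} (hCB : C ⊆ B) : (#(B ∩ C) / #C : 𝕜) * m C = m C := by
  obtain rfl | hC := C.eq_empty_or_nonempty
  · simp [hempty]
  · rw [inter_eq_right.mpr hCB, div_self (Nat.cast_ne_zero.mpr hC.card_pos.ne'), one_mul]

variable [Fintype Θ]

section Field

variable [Field 𝕜]

def betP (m : Finset Θ → 𝕜) (θ : Θ) : 𝕜 :=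
  ∑ C ∈ univ.filter (fun C : Finset Θ => θ ∈ C), m C / #C

theorem sum_betP (m : Finset Θ → 𝕜) (B : Finset Θ) :
    ∑ θ ∈ B, betP m θ = ∑ C : Finset Θ, (#(B ∩ C) / #C : 𝕜) * m C := by
  simp_rw [betP, sum_filter]
  rw [sum_comm]
  refine sum_congr rfl fun C _ => ?_
  rw [sum_ite_mem, sum_const, nsmul_eq_mul]
  ring

theorem sum_univ_betP [CharZero 𝕜] {m : Finset Θ → 𝕜} (hempty : m ∅ = 0)
    (htotal : ∑ C, m C = 1) : ∑ θ, betP m θ = 1 := by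
  rw [sum_betP, ← htotal]
  exact sum_congr rfl fun C _ => card_inter_div_card_mul_of_subset hempty (subset_univ C)

end Field

theorem sum_powerset_le_sum_betP [Field 𝕜] [LinearOrder 𝕜] [IsStrictOrderedRing 𝕜]
    {m : Finset Θ → 𝕜} (h0 : ∀ C, 0 ≤ m C) (hempty : m ∅ = 0) (B : Finset Θ) :
    ∑ C ∈ B.powerset, m C ≤ ∑ θ ∈ B, betP m θ := by
  rw [sum_betP]
  calc ∑ C ∈ B.powerset, m C
      = ∑ C ∈ B.powerset, (#(B ∩ C) / #C : 𝕜) * m C :=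
        (sum_congr rfl fun C hC =>
          card_inter_div_card_mul_of_subset hempty (mem_powerset.mp hC)).symm
    _ ≤ ∑ C : Finset Θ, (#(B ∩ C) / #C : 𝕜) * m C :=
        sum_le_sum_of_subset_of_nonneg (subset_univ _) fun C _ _ =>
          mul_nonneg (by positivity) (h0 C)

end

theorem betP_compatible_general {Θ : Type*} [Fintype Θ] [DecidableEq Θ]
    (m : Finset Θ → ℝ)
    (h0 : ∀ B, 0 ≤ m B)
    (hempty : m ∅ = 0)
    (htotal : ∑ B : Finset Θ, m B = 1)
    (BetP : Θ → ℝ)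
    (hBetP : ∀ θ : Θ, BetP θ = ∑ B ∈ Finset.univ.filter (fun B : Finset Θ => θ ∈ B),
        m B / B.card)
    (B : Finset Θ) :
    (∑ C ∈ B.powerset, m C) ≤ (∑ θ ∈ B, BetP θ) ∧
    (∑ θ ∈ B, BetP θ) ≤ 1 - ∑ C ∈ Bᶜ.powerset, m C := by
  obtain rfl : BetP = betP m := funext hBetP
  refine ⟨sum_powerset_le_sum_betP h0 hempty B, ?_⟩
  have hsplit := sum_add_sum_compl B (betP m)
  rw [sum_univ_betP hempty htotal] at hsplit
  linarith [sum_powerset_le_sum_betP h0 hempty Bᶜ]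

/-- the pignistic distribution is compatible with the BPA:
    Bl(B) ≤ Σ_{θ∈B} BetP(θ) ≤ Pl(B). -/
theorem betP_compatible {Θ : Type*} [Fintype Θ] [DecidableEq Θ] [Nonempty Θ]
    (m : Finset Θ → ℝ)
    (h0 : ∀ B, 0 ≤ m B) (h1 : ∀ B, m B ≤ 1)
    (hempty : m ∅ = 0)
    (htotal : ∑ B : Finset Θ, m B = 1)
    (BetP : Θ → ℝ)
    (hBetP : ∀ θ : Θ, BetP θ = ∑ B ∈ Finset.univ.filter (fun B : Finset Θ => θ ∈ B),
        m B / B.card)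
    (B : Finset Θ) :
    (∑ C ∈ B.powerset, m C) ≤ (∑ θ ∈ B, BetP θ) ∧
    (∑ θ ∈ B, BetP θ) ≤ 1 - ∑ C ∈ Bᶜ.powerset, m C :=
  betP_compatible_general m h0 hempty htotal BetP hBetP B
end

section
/- Under the Conditional Core Theorem hypotheses, if no focal element of m straddles the conditioning event A and its complement (i.e., every focal element is contained in A or in Θ\A), and Bl(A)>0, then the conditional core with respect to A equals in(A) = {B ∈ F : B ⊆ A}, the set of focal elements contained in A. -/
/-!
Since no focal element straddles `A` and `Aᶜ`, every focal element lies in `powerset A` or in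
`powerset (Aᶜ ∪ B)`, and these two families meet in `powerset (A ∩ B)`. Inclusion–exclusion for
the sum of `m` over them turns the Fagin–Halpern denominator `Bl (A ∩ B) + Pl (A ∩ Bᶜ)` into the
constant `Bl A`. Hence `Bl (· | A)` is the belief function of the mass `m` restricted to subsets
of `A` and scaled by `1 / Bl A`, and Möbius inversion on the powerset recovers that mass.
-/

open Finset

namespace Finset

variable {α R : Type*} [DecidableEq α]

theorem sum_powerset_neg_one_pow_card' [Ring R] (s : Finset α) :
    ∑ t ∈ s.powerset, (-1 : R) ^ #t = if s = ∅ then 1 else 0 := by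
  simpa using congrArg (Int.cast : ℤ → R) (sum_powerset_neg_one_pow_card (x := s))

theorem sum_Icc_neg_one_pow_card_sdiff [Ring R] {s t : Finset α} (hts : t ⊆ s) :
    ∑ u ∈ Icc t s, (-1 : R) ^ #(s \ u) = if t = s then 1 else 0 := by
  have hcompl : ∑ u ∈ Icc t s, (-1 : R) ^ #(s \ u) = ∑ v ∈ (s \ t).powerset, (-1 : R) ^ #v := by
    refine sum_nbij' (s \ ·) (s \ ·) ?_ ?_ ?_ ?_ fun _ _ => rfl
    · intro u hu
      exact mem_powerset.2 (sdiff_subset_sdiff subset_rfl (mem_Icc.1 hu).1)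
    · intro v hv
      have hvt := (subset_sdiff.1 (mem_powerset.1 hv)).2
      exact mem_Icc.2 ⟨subset_sdiff.2 ⟨hts, hvt.symm⟩, sdiff_subset⟩
    · intro u hu
      exact sdiff_sdiff_eq_self (mem_Icc.1 hu).2
    · intro v hv
      exact sdiff_sdiff_eq_self ((mem_powerset.1 hv).trans sdiff_subset)
  rw [hcompl, sum_powerset_neg_one_pow_card']
  exact if_congr (sdiff_eq_empty_iff_subset.trans ⟨hts.antisymm, fun h => h ▸ subset_rfl⟩) rfl rfl

theorem moebius_inversion_powerset [Ring R] (f g : Finset α → R)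
    (h : ∀ s, g s = ∑ t ∈ s.powerset, f t) (s : Finset α) :
    f s = ∑ t ∈ s.powerset, (-1 : R) ^ #(s \ t) * g t := by
  symm
  calc ∑ t ∈ s.powerset, (-1 : R) ^ #(s \ t) * g t
      = ∑ t ∈ s.powerset, ∑ u ∈ t.powerset, (-1 : R) ^ #(s \ t) * f u := by
        simp only [h, mul_sum]
    _ = ∑ u ∈ s.powerset, ∑ t ∈ Icc u s, (-1 : R) ^ #(s \ t) * f u := by
        refine sum_comm' fun t u => ?_
        simp only [mem_powerset, mem_Icc]
        exact ⟨fun ⟨hts, hut⟩ => ⟨⟨hut, hts⟩, hut.trans hts⟩, fun ⟨⟨hut, hts⟩, _⟩ => ⟨hts, hut⟩⟩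
    _ = ∑ u ∈ s.powerset, if u = s then f u else 0 := by
        refine sum_congr rfl fun u hu => ?_
        rw [← sum_mul, sum_Icc_neg_one_pow_card_sdiff (mem_powerset.1 hu), ite_mul, one_mul,
          zero_mul]
    _ = f s := by simp

theorem sum_powerset_inter_eq_sum_ite {M : Type*} [AddCommMonoid M] (m : Finset α → M)
    (A B : Finset α) :
    ∑ C ∈ (A ∩ B).powerset, m C = ∑ C ∈ B.powerset, if C ⊆ A then m C else 0 := by
  rw [← sum_filter]
  congr 1
  ext C
  simp only [mem_powerset, mem_filter, subset_inter_iff, and_comm]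

theorem sum_powerset_inter_add_sum_univ [Fintype α] {M : Type*} [AddCommMonoid M]
    {m : Finset α → M} {A : Finset α} (hm : ∀ C, m C ≠ 0 → C ⊆ A ∨ C ⊆ Aᶜ) (B : Finset α) :
    ∑ C ∈ (A ∩ B).powerset, m C + ∑ C, m C
      = ∑ C ∈ A.powerset, m C + ∑ C ∈ (Aᶜ ∪ B).powerset, m C := by
  have hinter : A.powerset ∩ (Aᶜ ∪ B).powerset = (A ∩ B).powerset := by
    ext C
    simp only [mem_inter, mem_powerset, ← subset_inter_iff, inter_union_distrib_left,
      inter_compl, empty_union]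
  have huniv : ∑ C ∈ A.powerset ∪ (Aᶜ ∪ B).powerset, m C = ∑ C, m C := by
    refine sum_subset (subset_univ _) fun C _ hC => ?_
    by_contra hC0
    rcases hm C hC0 with hCA | hCA
    · exact hC (mem_union_left _ (mem_powerset.2 hCA))
    · exact hC (mem_union_right _ (mem_powerset.2 (hCA.trans subset_union_left)))
  rw [← sum_union_inter (s₁ := A.powerset), hinter, huniv, add_comm]

end Finset

theorem conditional_core_no_straddle_general {Θ : Type*} [Fintype Θ] [DecidableEq Θ]
    (m : Finset Θ → ℝ)
    (h0 : ∀ B, 0 ≤ m B)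
    (htotal : ∑ B : Finset Θ, m B = 1)
    (Bl Pl : Finset Θ → ℝ)
    (hBl : ∀ B, Bl B = ∑ C ∈ B.powerset, m C)
    (hPl : ∀ B, Pl B = 1 - Bl Bᶜ)
    (A : Finset Θ) (hA : 0 < Bl A)
    (hnostraddle : ∀ B : Finset Θ, 0 < m B → B ⊆ A ∨ B ⊆ Aᶜ)
    (BlCond mCond : Finset Θ → ℝ)
    (hBlCond : ∀ B, BlCond B = Bl (A ∩ B) / (Bl (A ∩ B) + Pl (A ∩ Bᶜ)))
    (hmCond : ∀ B : Finset Θ,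
        mCond B = ∑ C ∈ B.powerset, (-1 : ℝ) ^ ((B \ C).card) * BlCond C) :
    ∀ B : Finset Θ, 0 < mCond B ↔ (0 < m B ∧ B ⊆ A) := by
  have hden : ∀ B, Bl (A ∩ B) + Pl (A ∩ Bᶜ) = Bl A := fun B => by
    have hincl_excl := sum_powerset_inter_add_sum_univ
      (fun C hC => hnostraddle C ((h0 C).lt_of_ne' hC)) B
    rw [hPl, compl_inter, compl_compl]
    simp only [hBl] at hincl_excl ⊢
    linarith
  have hBlCond' : ∀ B, BlCond B = ∑ C ∈ B.powerset, (if C ⊆ A then m C else 0) / Bl A :=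
    fun B => by rw [hBlCond, hden, ← sum_div, hBl, sum_powerset_inter_eq_sum_ite]
  have hmCond' : ∀ B, mCond B = (if B ⊆ A then m B else 0) / Bl A := fun B => by
    rw [hmCond, moebius_inversion_powerset _ _ hBlCond']
  intro B
  rw [hmCond', div_pos_iff_of_pos_right hA]
  split_ifs with hBA <;> simp [hBA]

/-- if no focal element straddles A and its complement, the
    conditional core w.r.t. A is exactly in(A) = {B ∈ F : B ⊆ A}. -/
theorem conditional_core_no_straddle {Θ : Type*} [Fintype Θ] [DecidableEq Θ]
    (m : Finset Θ → ℝ)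
    (h0 : ∀ B, 0 ≤ m B) (h1 : ∀ B, m B ≤ 1)
    (hempty : m ∅ = 0)
    (htotal : ∑ B : Finset Θ, m B = 1)
    (Bl Pl : Finset Θ → ℝ)
    (hBl : ∀ B, Bl B = ∑ C ∈ B.powerset, m C)
    (hPl : ∀ B, Pl B = 1 - Bl Bᶜ)
    (A : Finset Θ) (hA : 0 < Bl A)
    (hnostraddle : ∀ B : Finset Θ, 0 < m B → B ⊆ A ∨ B ⊆ Aᶜ)
    (BlCond mCond : Finset Θ → ℝ)
    (hBlCond : ∀ B, BlCond B = Bl (A ∩ B) / (Bl (A ∩ B) + Pl (A ∩ Bᶜ)))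
    (hmCond : ∀ B : Finset Θ,
        mCond B = ∑ C ∈ B.powerset, (-1 : ℝ) ^ ((B \ C).card) * BlCond C) :
    ∀ B : Finset Θ, 0 < mCond B ↔ (0 < m B ∧ B ⊆ A) :=
  conditional_core_no_straddle_general m h0 htotal Bl Pl hBl hPl A hA hnostraddle BlCond mCond
    hBlCond hmCond
end
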